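/- Fix a real constant b and define f(a) = ∫_{-∞}^{+∞} Φ(a + bx) φ(x) dx. Then f is strictly increasing on ℝ and f(a) = ∫_{-∞}^{a} (1/(√(2π)√(1+b²))) e^{-t²/(2(1+b²))} dt for every a ∈ ℝ. -/

import Mathlib

/-!
Writing `Φ(a + b x) = ∫_{t ≤ a} φ(t + b x) dt` and swapping the two integrals (the integrand
`φ(t + b x) φ(x)` is absolutely integrable on `ℝ²` because `φ` is) gives `f(a) = ∫_{t ≤ a} ψ(t) dt`
with `ψ(t) = ∫ φ(t + b x) φ(x) dx`. Completing the square in `x` shows that `ψ` is the density of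
`N(0, 1 + b²)`, which is positive, so `f` is strictly increasing.
-/

open MeasureTheory Real

/-- The density of the standard normal distribution. -/
noncomputable def stdGaussianPDF (x : ℝ) : ℝ :=
  (Real.sqrt (2 * Real.pi))⁻¹ * Real.exp (-x ^ 2 / 2)

/-- The cumulative distribution function of the standard normal distribution. -/
noncomputable def stdGaussianCDF (x : ℝ) : ℝ :=
  ∫ t in Set.Iic x, stdGaussianPDF t

open Set ProbabilityTheory
open scoped NNReal

lemma setIntegral_Iic_comp_add_right {E : Type*} [NormedAddCommGroup E] [NormedSpace ℝ E]
    (g : ℝ → E) (a c : ℝ) : ∫ t in Iic a, g (t + c) = ∫ t in Iic (a + c), g t := by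
  have := (measurePreserving_add_right volume c).setIntegral_preimage_emb
    (measurableEmbedding_addRight c) g (Iic (a + c))
  rwa [preimage_add_const_Iic, add_sub_cancel_right] at this

lemma strictMono_setIntegral_Iic {g : ℝ → ℝ} (hg : Integrable g) (hpos : ∀ t, 0 < g t) :
    StrictMono fun a => ∫ t in Iic a, g t := fun a a' h => by
  have hsub :=
    intervalIntegral.integral_Iic_sub_Iic hg.integrableOn hg.integrableOn (a := a) (b := a')
  have hIoc := intervalIntegral.intervalIntegral_pos_of_pos hg.intervalIntegrable hpos h
  dsimp only
  linarith

lemma integral_setIntegral_comp_add_mul_swap {g h : ℝ → ℝ} (hgm : Measurable g)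
    (hg : Integrable g) (hhm : Measurable h) (hh : Integrable h) (s : Set ℝ) (c : ℝ) :
    ∫ x, (∫ t in s, g (t + c * x)) * h x = ∫ t in s, ∫ x, g (t + c * x) * h x := by
  have hmeas : AEStronglyMeasurable (fun p : ℝ × ℝ => g (p.2 + c * p.1) * h p.1)
      (volume.prod (volume.restrict s)) :=
    ((hgm.comp (by fun_prop)).mul (hhm.comp measurable_fst)).aestronglyMeasurable
  have hF : Integrable (fun p : ℝ × ℝ => g (p.2 + c * p.1) * h p.1)
      (volume.prod (volume.restrict s)) := by
    refine (integrable_prod_iff hmeas).2 ⟨ae_of_all _ fun x => ?_, ?_⟩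
    · exact ((hg.comp_add_right (c * x)).mul_const (h x)).restrict
    · refine Integrable.mono' (hh.norm.const_mul (∫ t, ‖g t‖)) hmeas.norm.integral_prod_right'
        (ae_of_all _ fun x => ?_)
      simp only [norm_mul, norm_norm, integral_mul_const]
      rw [Real.norm_of_nonneg (by positivity)]
      gcongr
      calc ∫ t in s, ‖g (t + c * x)‖ ≤ ∫ t, ‖g (t + c * x)‖ :=
            setIntegral_le_integral (hg.comp_add_right (c * x)).norm
              (ae_of_all _ fun _ => norm_nonneg _)
        _ = ∫ t, ‖g t‖ := integral_add_right_eq_self (fun t => ‖g t‖) (c * x)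
  simp_rw [← integral_mul_const]
  exact integral_integral_swap hF

lemma stdGaussianPDF_eq_gaussianPDFReal : stdGaussianPDF = gaussianPDFReal 0 1 := by
  ext x
  simp [stdGaussianPDF, gaussianPDFReal]

lemma measurable_stdGaussianPDF : Measurable stdGaussianPDF :=
  stdGaussianPDF_eq_gaussianPDFReal ▸ measurable_gaussianPDFReal 0 1

lemma integrable_stdGaussianPDF : Integrable stdGaussianPDF :=
  stdGaussianPDF_eq_gaussianPDFReal ▸ integrable_gaussianPDFReal 0 1

lemma gaussianPDFReal_zero_apply (v : ℝ≥0) (t : ℝ) :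
    gaussianPDFReal 0 v t = (√(2 * π) * √v)⁻¹ * exp (-t ^ 2 / (2 * v)) := by
  simp [gaussianPDFReal, Real.sqrt_mul (by positivity : (0:ℝ) ≤ 2 * π)]

lemma integral_stdGaussianPDF_add_mul_mul (b t : ℝ) :
    ∫ x, stdGaussianPDF (t + b * x) * stdGaussianPDF x
      = gaussianPDFReal 0 (1 + b ^ 2).toNNReal t := by
  have hv : 0 < 1 + b ^ 2 := by positivity
  have h2π : 0 < 2 * π := by positivity
  have hsquare (x : ℝ) : stdGaussianPDF (t + b * x) * stdGaussianPDF x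
      = (2 * π)⁻¹ * exp (-t ^ 2 / (2 * (1 + b ^ 2)))
        * exp (-((1 + b ^ 2) / 2) * (x + b * t / (1 + b ^ 2)) ^ 2) := by
    have hexp : -(t + b * x) ^ 2 / 2 + -x ^ 2 / 2 = -t ^ 2 / (2 * (1 + b ^ 2))
        + -((1 + b ^ 2) / 2) * (x + b * t / (1 + b ^ 2)) ^ 2 := by
      field_simp
      ring
    rw [stdGaussianPDF, stdGaussianPDF, mul_mul_mul_comm, ← exp_add, hexp, exp_add, ← mul_inv,
      mul_self_sqrt h2π.le, mul_assoc]
  have hsqrt : √(π / ((1 + b ^ 2) / 2)) = √(2 * π) / √(1 + b ^ 2) := by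
    rw [← sqrt_div h2π.le]
    congr 1
    field_simp
  simp_rw [hsquare, integral_const_mul]
  rw [integral_add_right_eq_self (fun y => exp (-((1 + b ^ 2) / 2) * y ^ 2)), integral_gaussian,
    gaussianPDFReal_zero_apply, coe_toNNReal _ hv.le, hsqrt]
  have hsqrt2π := mul_self_sqrt h2π.le
  field_simp
  linear_combination hsqrt2π

lemma integral_stdGaussianCDF_add_mul_mul (a b : ℝ) :
    ∫ x, stdGaussianCDF (a + b * x) * stdGaussianPDF x
      = ∫ t in Iic a, gaussianPDFReal 0 (1 + b ^ 2).toNNReal t := by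
  simp_rw [stdGaussianCDF, ← setIntegral_Iic_comp_add_right]
  rw [integral_setIntegral_comp_add_mul_swap measurable_stdGaussianPDF integrable_stdGaussianPDF
    measurable_stdGaussianPDF integrable_stdGaussianPDF]
  simp_rw [integral_stdGaussianPDF_add_mul_mul]

/-- `f(a) = ∫ Φ(a + bx) φ(x) dx` is strictly increasing and equals
`∫_{-∞}^a (1/(√(2π)√(1+b²))) e^{-t²/(2(1+b²))} dt`. -/
theorem integral_stdGaussianCDF_affine_strictMono_and_eq (b : ℝ) :
    StrictMono (fun a : ℝ => ∫ x, stdGaussianCDF (a + b * x) * stdGaussianPDF x) ∧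
      ∀ a : ℝ,
        (∫ x, stdGaussianCDF (a + b * x) * stdGaussianPDF x)
          = ∫ t in Set.Iic a,
              (Real.sqrt (2 * Real.pi) * Real.sqrt (1 + b ^ 2))⁻¹
                * Real.exp (-t ^ 2 / (2 * (1 + b ^ 2))) := by
  have hv : 0 < 1 + b ^ 2 := by positivity
  simp_rw [integral_stdGaussianCDF_add_mul_mul]
  refine ⟨strictMono_setIntegral_Iic (integrable_gaussianPDFReal _ _)
    fun t => gaussianPDFReal_pos _ _ t (by simpa using hv), fun a => ?_⟩
  simp_rw [gaussianPDFReal_zero_apply, coe_toNNReal _ hv.le]
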